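/- arXiv:2210.07881 — 3 statements merged into one kernel-verified Lean document; each statement's English description precedes it below -/
import Mathlib

section
/- Let A, B, C, T, α be positive reals and define g(γ) = A/(γT) + Bγ + Cγ² for γ > 0. Then inf_{γ ∈ (0,α]} g(γ) ≤ 2·√(AB/T) + 2·C^{1/3}·(A/T)^{2/3} + A/(αT). -/
/-!
Take `γ = min α (min a b)` with `a = √(A/(BT))` and `b = (A/(CT))^{1/3}`, the step sizes at which
`A/(γT)` balances `Bγ` and `Cγ²` respectively. Since `1/min ≤` the sum of the reciprocals,
`A/(γT) ≤ A/(αT) + A/(aT) + A/(bT)`, while `Bγ ≤ Ba` and `Cγ² ≤ Cb²`; at the balance points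
`A/(aT) = Ba = √(AB/T)` and `A/(bT) = Cb² = C^{1/3}(A/T)^{2/3}`.
-/

open Real

lemma div_min_le_div_add_div {c u v : ℝ} (hc : 0 ≤ c) (hu : 0 < u) (hv : 0 < v) :
    c / min u v ≤ c / u + c / v := by
  rcases min_cases u v with ⟨h, -⟩ | ⟨h, -⟩ <;> rw [h]
  · linarith [div_nonneg hc hv.le]
  · linarith [div_nonneg hc hu.le]

lemma div_sqrt_div_eq_sqrt_mul {p q : ℝ} (hp : 0 < p) :
    p / √(p / q) = √(p * q) := by
  have : 0 < √p := sqrt_pos.2 hp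
  rw [sqrt_div hp.le, sqrt_mul hp.le]
  field_simp
  rw [sq_sqrt hp.le]

lemma mul_sqrt_div_eq_sqrt_mul {p q : ℝ} (hp : 0 ≤ p) (hq : 0 ≤ q) :
    q * √(p / q) = √(p * q) := by
  rw [sqrt_div hp, sqrt_mul hp]
  rcases hq.eq_or_lt with rfl | hq
  · simp
  have : 0 < √q := sqrt_pos.2 hq
  field_simp
  rw [sq_sqrt hq.le, mul_comm]

lemma rpow_third_mul_rpow_two_thirds {x : ℝ} (hx : 0 ≤ x) :
    x ^ (1/3 : ℝ) * x ^ (2/3 : ℝ) = x := by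
  rw [← rpow_add' hx (by norm_num)]; norm_num

lemma div_rpow_third_div {p C : ℝ} (hp : 0 < p) (hC : 0 ≤ C) :
    p / (p / C) ^ (1/3 : ℝ) = C ^ (1/3 : ℝ) * p ^ (2/3 : ℝ) := by
  have hsplit := rpow_third_mul_rpow_two_thirds hp.le
  have : 0 < p ^ (1/3 : ℝ) := rpow_pos_of_pos hp _
  rw [div_rpow hp.le hC]
  field_simp
  nth_rw 1 [← hsplit]
  ring

lemma mul_sq_rpow_third_div {p C : ℝ} (hp : 0 ≤ p) (hC : 0 < C) :
    C * ((p / C) ^ (1/3 : ℝ)) ^ 2 = C ^ (1/3 : ℝ) * p ^ (2/3 : ℝ) := by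
  have hsplit := rpow_third_mul_rpow_two_thirds hC.le
  have : 0 < C ^ (2/3 : ℝ) := rpow_pos_of_pos hC _
  rw [div_rpow hp hC.le, div_pow, ← rpow_natCast, ← rpow_natCast, ← rpow_mul hp,
    ← rpow_mul hC.le]
  norm_num
  field_simp
  nth_rw 1 [← hsplit]
  ring

/-- For positive `A, B, C, T, α` and `g(γ) = A/(γT) + Bγ + Cγ²`,
`inf_{γ ∈ (0,α]} g(γ) ≤ 2√(AB/T) + 2 C^{1/3} (A/T)^{2/3} + A/(αT)`. -/
theorem inf_stepsize_bound (A B C T α : ℝ) (hA : 0 < A) (hB : 0 < B) (hC : 0 < C)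
    (hT : 0 < T) (hα : 0 < α) :
    sInf ((fun γ : ℝ => A/(γ*T) + B*γ + C*γ^2) '' Set.Ioc 0 α) ≤
      2 * Real.sqrt (A*B/T) + 2 * C^((1:ℝ)/3) * (A/T)^((2:ℝ)/3) + A/(α*T) := by
  set p := A / T
  have hp : 0 < p := div_pos hA hT
  set a := √(p / B)
  set b := (p / C) ^ (1/3 : ℝ)
  have ha : 0 < a := sqrt_pos.2 (div_pos hp hB)
  have hb : 0 < b := rpow_pos_of_pos (div_pos hp hC) _
  set γ := min α (min a b)
  have hγ : 0 < γ := lt_min hα (lt_min ha hb)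
  have hbdd : BddBelow ((fun γ : ℝ => A/(γ*T) + B*γ + C*γ^2) '' Set.Ioc 0 α) := by
    refine ⟨0, ?_⟩
    rintro _ ⟨u, ⟨hu, -⟩, rfl⟩
    positivity
  have hAγ : A / (γ * T) ≤ p / α + (p / a + p / b) := by
    rw [div_mul_eq_div_div_swap]
    exact (div_min_le_div_add_div hp.le hα (lt_min ha hb)).trans
      (add_le_add_right (div_min_le_div_add_div hp.le ha hb) _)
  calc sInf _ ≤ A / (γ * T) + B * γ + C * γ ^ 2 :=
        csInf_le hbdd ⟨γ, ⟨hγ, min_le_left _ _⟩, rfl⟩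
    _ ≤ p / α + (p / a + p / b) + B * a + C * b ^ 2 := by
      gcongr
      · exact (min_le_right _ _).trans (min_le_left _ _)
      · exact (min_le_right _ _).trans (min_le_right _ _)
    _ = _ := by
      rw [div_sqrt_div_eq_sqrt_mul hp, mul_sqrt_div_eq_sqrt_mul hp.le hB.le,
        div_rpow_third_div hp hC.le, mul_sq_rpow_third_div hp.le hC,
        div_mul_eq_div_div_swap, mul_div_right_comm]
      ring
end

section
/- Let W(t) = (1−η)I + ηA where η ∈ (0,1), A is a random doubly stochastic matrix with E[A] = W satisfying ‖ΠWy‖ ≤ ρ‖Πy‖ for all y, and ‖A‖₂ ≤ 1 almost surely. Then for all x ∈ ℝ^n, E[‖ΠW(t)x‖²] ≤ (1 − 2η(1−η)(1−ρ))·‖Πx‖². -/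
/-! Write `p = Πx` and `g = ΠAx`, so that `ΠW(t)x = (1 - η)p + ηg`. A doubly stochastic `A`
commutes with `Π`, hence `‖g‖ = ‖AΠx‖ ≤ ‖p‖` almost surely, and expanding the square gives
`‖ΠW(t)x‖² ≤ ((1 - η)² + η²)‖p‖² + 2η(1 - η)⟪p, g⟫`. By linearity `E⟪p, g⟫ = ⟪p, ΠWx⟫ ≤ ρ‖p‖²`,
and `(1 - η)² + η² + 2η(1 - η)ρ = 1 - 2η(1 - η)(1 - ρ)`. -/

open Matrix MeasureTheory

/-- The centering projection `Π = I − (1/n) 𝟙𝟙ᵀ`. -/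
noncomputable def centerProj (n : ℕ) : Matrix (Fin n) (Fin n) ℝ :=
  1 - (n : ℝ)⁻¹ • Matrix.of (fun _ _ => (1 : ℝ))

open scoped InnerProductSpace

section RandomMatrix

variable {m n Ω E : Type*} [Fintype m] [Fintype n] [DecidableEq m] [DecidableEq n]
  [MeasurableSpace Ω] {μ : Measure Ω} [NormedAddCommGroup E] [NormedSpace ℝ E]
  (L : Matrix m n ℝ →ₗ[ℝ] E)

theorem Matrix.linearMap_apply_eq_sum (M : Matrix m n ℝ) :
    L M = ∑ i, ∑ j, M i j • L (single i j 1) := by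
  conv_lhs => rw [matrix_eq_sum_single M]
  simp only [map_sum, ← map_smul, smul_single, smul_eq_mul, mul_one]

theorem Matrix.integrable_linearMap_comp {A : Ω → Matrix m n ℝ}
    (hint : ∀ i j, Integrable (fun ω => A ω i j) μ) : Integrable (fun ω => L (A ω)) μ := by
  rw [funext fun ω => linearMap_apply_eq_sum L (A ω)]
  exact integrable_finsetSum _ fun i _ => integrable_finsetSum _ fun j _ =>
    (hint i j).smul_const _

theorem Matrix.integral_linearMap_comp [CompleteSpace E] {A : Ω → Matrix m n ℝ}
    {W : Matrix m n ℝ} (hint : ∀ i j, Integrable (fun ω => A ω i j) μ)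
    (hmean : ∀ i j, ∫ ω, A ω i j ∂μ = W i j) : ∫ ω, L (A ω) ∂μ = L W := by
  rw [funext fun ω => linearMap_apply_eq_sum L (A ω), linearMap_apply_eq_sum L W]
  rw [integral_finsetSum _ fun i _ => integrable_finsetSum _ fun j _ => (hint i j).smul_const _]
  refine Finset.sum_congr rfl fun i _ => ?_
  rw [integral_finsetSum _ fun j _ => (hint i j).smul_const _]
  simp_rw [integral_smul_const, hmean]

end RandomMatrix

section LazyStep

variable {E : Type*} [NormedAddCommGroup E] [InnerProductSpace ℝ E]

theorem norm_sq_smul_add_smul_le {p g : E} (hg : ‖g‖ ≤ ‖p‖) (η : ℝ) :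
    ‖(1 - η) • p + η • g‖ ^ 2 ≤
      ((1 - η) ^ 2 + η ^ 2) * ‖p‖ ^ 2 + 2 * η * (1 - η) * ⟪p, g⟫_ℝ := by
  have hsq : η ^ 2 * ‖g‖ ^ 2 ≤ η ^ 2 * ‖p‖ ^ 2 := by gcongr
  rw [norm_add_sq_real, norm_smul, norm_smul, real_inner_smul_left, real_inner_smul_right,
    mul_pow, mul_pow, Real.norm_eq_abs, Real.norm_eq_abs, sq_abs, sq_abs]
  linarith

theorem norm_smul_add_smul_le {p g : E} (hg : ‖g‖ ≤ ‖p‖) {η : ℝ} (hη0 : 0 ≤ η) (hη1 : η ≤ 1) :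
    ‖(1 - η) • p + η • g‖ ≤ ‖p‖ :=
  calc ‖(1 - η) • p + η • g‖ ≤ (1 - η) * ‖p‖ + η * ‖g‖ := by
        refine (norm_add_le _ _).trans_eq ?_
        rw [norm_smul, norm_smul, Real.norm_of_nonneg (by linarith), Real.norm_of_nonneg hη0]
    _ ≤ (1 - η) * ‖p‖ + η * ‖p‖ := by gcongr
    _ = ‖p‖ := by ring

variable [CompleteSpace E] {Ω : Type*} [MeasurableSpace Ω] {μ : Measure Ω} [IsProbabilityMeasure μ]

theorem integral_norm_sq_smul_add_smul_le {p : E} {g : Ω → E} (hg : Integrable g μ)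
    (hg_le : ∀ᵐ ω ∂μ, ‖g ω‖ ≤ ‖p‖) {ρ : ℝ} (hρ : ⟪p, ∫ ω, g ω ∂μ⟫_ℝ ≤ ρ * ‖p‖ ^ 2)
    {η : ℝ} (hη0 : 0 ≤ η) (hη1 : η ≤ 1) :
    ∫ ω, ‖(1 - η) • p + η • g ω‖ ^ 2 ∂μ ≤ (1 - 2 * η * (1 - η) * (1 - ρ)) * ‖p‖ ^ 2 := by
  have hint : Integrable (fun ω => ‖(1 - η) • p + η • g ω‖ ^ 2) μ := by
    refine (integrable_const (‖p‖ ^ 2)).mono'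
      ((aestronglyMeasurable_const.add (hg.aestronglyMeasurable.const_smul η)).norm.pow 2) ?_
    filter_upwards [hg_le] with ω hω
    rw [norm_pow, norm_norm]
    gcongr
    exact norm_smul_add_smul_le hω hη0 hη1
  have hbound_int := (integrable_const (((1 - η) ^ 2 + η ^ 2) * ‖p‖ ^ 2)).add
    ((hg.const_inner p).const_mul (2 * η * (1 - η)))
  calc ∫ ω, ‖(1 - η) • p + η • g ω‖ ^ 2 ∂μ
      ≤ ∫ ω, ((1 - η) ^ 2 + η ^ 2) * ‖p‖ ^ 2 + 2 * η * (1 - η) * ⟪p, g ω⟫_ℝ ∂μ :=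
        integral_mono_ae hint hbound_int (hg_le.mono fun ω hω => norm_sq_smul_add_smul_le hω η)
    _ = ((1 - η) ^ 2 + η ^ 2) * ‖p‖ ^ 2 + 2 * η * (1 - η) * ⟪p, ∫ ω, g ω ∂μ⟫_ℝ := by
        rw [integral_add (integrable_const _) ((hg.const_inner p).const_mul _), integral_const,
          integral_const_mul, integral_inner hg, probReal_univ, one_smul]
    _ ≤ ((1 - η) ^ 2 + η ^ 2) * ‖p‖ ^ 2 + 2 * η * (1 - η) * (ρ * ‖p‖ ^ 2) := by
        have : 0 ≤ 2 * η * (1 - η) := by nlinarith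
        gcongr
    _ = (1 - 2 * η * (1 - η) * (1 - ρ)) * ‖p‖ ^ 2 := by ring

end LazyStep

section DoublyStochastic

variable {R n : Type*} [Semiring R] [PartialOrder R] [IsOrderedRing R] [Fintype n]
  [DecidableEq n] {M : Matrix n n R}

theorem Matrix.of_one_mul_of_mem_doublyStochastic (hM : M ∈ doublyStochastic R n) :
    of (fun _ _ => (1 : R)) * M = of (fun _ _ => 1) := by
  ext i j
  simp [mul_apply, sum_col_of_mem_doublyStochastic hM j]

theorem Matrix.mul_of_one_of_mem_doublyStochastic (hM : M ∈ doublyStochastic R n) :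
    M * of (fun _ _ => (1 : R)) = of (fun _ _ => 1) := by
  ext i j
  simp [mul_apply, sum_row_of_mem_doublyStochastic hM i]

end DoublyStochastic

theorem commute_centerProj_of_mem_doublyStochastic {n : ℕ} {M : Matrix (Fin n) (Fin n) ℝ}
    (hM : M ∈ doublyStochastic ℝ (Fin n)) : Commute (centerProj n) M :=
  (Commute.one_left M).sub_left <| Commute.smul_left
    ((of_one_mul_of_mem_doublyStochastic hM).trans (mul_of_one_of_mem_doublyStochastic hM).symm) _

theorem od_equidyn_consensus_general (n : ℕ) {Ω : Type*} [MeasureSpace Ω]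
    [IsProbabilityMeasure (volume : Measure Ω)]
    (A : Ω → Matrix (Fin n) (Fin n) ℝ)
    (hA : ∀ ω, A ω ∈ doublyStochastic ℝ (Fin n))
    (W : Matrix (Fin n) (Fin n) ℝ)
    (hmean : ∀ i j : Fin n, ∫ ω, A ω i j = W i j)
    (hint : ∀ i j : Fin n, Integrable (fun ω => A ω i j))
    (ρ : ℝ)
    (hcons : ∀ y : EuclideanSpace ℝ (Fin n),
      ‖Matrix.toEuclideanCLM (𝕜 := ℝ) (centerProj n * W) y‖ ≤
        ρ * ‖Matrix.toEuclideanCLM (𝕜 := ℝ) (centerProj n) y‖)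
    (hAnorm : ∀ᵐ ω, ‖Matrix.toEuclideanCLM (𝕜 := ℝ) (A ω)‖ ≤ 1)
    (η : ℝ) (hη0 : 0 < η) (hη1 : η < 1)
    (x : EuclideanSpace ℝ (Fin n)) :
    (∫ ω, ‖Matrix.toEuclideanCLM (𝕜 := ℝ)
        (centerProj n * ((1-η) • (1 : Matrix (Fin n) (Fin n) ℝ) + η • A ω)) x‖^2)
      ≤ (1 - 2*η*(1-η)*(1-ρ)) *
        ‖Matrix.toEuclideanCLM (𝕜 := ℝ) (centerProj n) x‖^2 := by
  set p := toEuclideanCLM (𝕜 := ℝ) (centerProj n) x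
  let L : Matrix (Fin n) (Fin n) ℝ →ₗ[ℝ] EuclideanSpace ℝ (Fin n) :=
    { toFun := fun M => toEuclideanCLM (𝕜 := ℝ) (centerProj n * M) x
      map_add' := fun M N => by simp [mul_add]
      map_smul' := fun c M => by simp }
  have hstep : ∀ ω, toEuclideanCLM (𝕜 := ℝ) (centerProj n * ((1 - η) • 1 + η • A ω)) x =
      (1 - η) • p + η • L (A ω) := fun ω => by simp [L, p, mul_add]
  have hL_le : ∀ᵐ ω, ‖L (A ω)‖ ≤ ‖p‖ := by
    filter_upwards [hAnorm] with ω hω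
    calc ‖L (A ω)‖ = ‖toEuclideanCLM (𝕜 := ℝ) (A ω) p‖ := by
          change ‖toEuclideanCLM (𝕜 := ℝ) (centerProj n * A ω) x‖ = _
          rw [(commute_centerProj_of_mem_doublyStochastic (hA ω)).eq, map_mul]
          rfl
      _ ≤ ‖p‖ :=
          (ContinuousLinearMap.le_opNorm _ _).trans (mul_le_of_le_one_left (norm_nonneg _) hω)
  have hmean_le : ⟪p, ∫ ω, L (A ω)⟫_ℝ ≤ ρ * ‖p‖ ^ 2 := by
    rw [integral_linearMap_comp L hint hmean]
    calc ⟪p, L W⟫_ℝ ≤ ‖p‖ * ‖L W‖ := real_inner_le_norm _ _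
      _ ≤ ‖p‖ * (ρ * ‖p‖) := by gcongr; exact hcons x
      _ = ρ * ‖p‖ ^ 2 := by ring
  simp_rw [hstep]
  exact integral_norm_sq_smul_add_smul_le (integrable_linearMap_comp L hint) hL_le hmean_le
    hη0.le hη1.le

/-- OD-EquiDyn consensus: if `W(t) = (1−η)I + ηA` where `A` is a random doubly
stochastic matrix with `E[A] = W`, `W` has consensus rate `ρ`, and `‖A‖₂ ≤ 1`
a.s., then `E[‖ΠW(t)x‖²] ≤ (1 − 2η(1−η)(1−ρ)) ‖Πx‖²`. -/
theorem od_equidyn_consensus (n : ℕ) {Ω : Type*} [MeasureSpace Ω]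
    [IsProbabilityMeasure (volume : Measure Ω)]
    (A : Ω → Matrix (Fin n) (Fin n) ℝ)
    (hA : ∀ ω, A ω ∈ doublyStochastic ℝ (Fin n))
    (W : Matrix (Fin n) (Fin n) ℝ)
    (hmean : ∀ i j : Fin n, ∫ ω, A ω i j = W i j)
    (hint : ∀ i j : Fin n, Integrable (fun ω => A ω i j))
    (ρ : ℝ) (hρ0 : 0 ≤ ρ) (hρ1 : ρ < 1)
    (hcons : ∀ y : EuclideanSpace ℝ (Fin n),
      ‖Matrix.toEuclideanCLM (𝕜 := ℝ) (centerProj n * W) y‖ ≤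
        ρ * ‖Matrix.toEuclideanCLM (𝕜 := ℝ) (centerProj n) y‖)
    (hAnorm : ∀ᵐ ω, ‖Matrix.toEuclideanCLM (𝕜 := ℝ) (A ω)‖ ≤ 1)
    (η : ℝ) (hη0 : 0 < η) (hη1 : η < 1)
    (x : EuclideanSpace ℝ (Fin n)) :
    (∫ ω, ‖Matrix.toEuclideanCLM (𝕜 := ℝ)
        (centerProj n * ((1-η) • (1 : Matrix (Fin n) (Fin n) ℝ) + η • A ω)) x‖^2)
      ≤ (1 - 2*η*(1-η)*(1-ρ)) *
        ‖Matrix.toEuclideanCLM (𝕜 := ℝ) (centerProj n) x‖^2 :=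
  od_equidyn_consensus_general n A hA W hmean hint ρ hcons hAnorm η hη0 hη1 x
end

section
/- Fix n ≥ 2 and v with 1 ≤ v ≤ n/2. Consider the maximal matching on the cycle vertex set {1,…,n} built greedily as follows with starting point s = 1: scanning j = 1, 2, …, n in order, connect j with (j+v mod n) whenever both are currently unmatched. Then the number of matched vertices is at least 2n/3. -/
/-!
Let `σ x = (x + v) % n`, a permutation of `{0, …, n-1}` without fixed points, and let `B` be the
matched set and `U` its complement. By maximality, when an unmatched `u` was scanned its neighbour
`σ u` was already taken, and since `u` is free, `σ u` must have been matched forward, to `σ (σ u)`.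
So `σ` and `σ ∘ σ` map `U` injectively into `B`, with disjoint images (`σ (σ u₁) = σ u₂` would
force `u₂ = σ u₁ ∈ B`). Hence `2 |U| ≤ |B|`, i.e. `2 (n - |B|) ≤ |B|`.
-/

/-- Greedy matching on the cycle `{0,…,n-1}` with step `v`, starting at `0`:
scanning `j = 0,1,…,n-1` in order, connect `j` with `(j+v) mod n` whenever both
are currently unmatched. Returns the set of matched vertices. -/
def greedyMatched (n v : ℕ) : Finset ℕ :=
  (List.range n).foldl (fun b j =>
    let i := (j + v) % n
    if i ≠ j ∧ i ∉ b ∧ j ∉ b then insert i (insert j b) else b) ∅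

open Finset

theorem two_mul_card_sdiff_le_card {α : Type*} [DecidableEq α] {s B : Finset α} {f : α → α}
    (hf : Set.InjOn f s) (hfs : Set.MapsTo f s s)
    (hfB : ∀ u ∈ s \ B, f u ∈ B ∧ f (f u) ∈ B) :
    2 * #(s \ B) ≤ #B := by
  have hsub : ((s \ B : Finset α) : Set α) ⊆ s := coe_subset.mpr sdiff_subset
  have hdisj : Disjoint ((s \ B).image f) ((s \ B).image (f ∘ f)) := by
    refine disjoint_left.mpr fun x hx hx' => ?_
    obtain ⟨u₁, hu₁, rfl⟩ := mem_image.mp hx'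
    obtain ⟨u₂, hu₂, h⟩ := mem_image.mp hx
    have : u₂ = f u₁ := hf (hsub hu₂) (hfs (hsub hu₁)) h
    exact (mem_sdiff.mp hu₂).2 (this ▸ (hfB u₁ hu₁).1)
  calc 2 * #(s \ B) = #((s \ B).image f) + #((s \ B).image (f ∘ f)) := by
        rw [card_image_of_injOn (hf.mono hsub), card_image_of_injOn ((hf.comp hf hfs).mono hsub)]
        ring
    _ = #((s \ B).image f ∪ (s \ B).image (f ∘ f)) := (card_union_of_disjoint hdisj).symm
    _ ≤ #B := by
        refine card_le_card (union_subset ?_ ?_) <;>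
          rintro _ hx <;> obtain ⟨u, hu, rfl⟩ := mem_image.mp hx
        exacts [(hfB u hu).1, (hfB u hu).2]

namespace GreedyMatching

variable {n v : ℕ}

theorem add_mod_injOn : Set.InjOn (fun x => (x + v) % n) (range n) := by
  intro x hx y hy h
  have : x % n = y % n := Nat.ModEq.add_right_cancel' v h
  rwa [Nat.mod_eq_of_lt (mem_range.mp hx), Nat.mod_eq_of_lt (mem_range.mp hy)] at this

theorem add_mod_ne_self (hv : ¬ n ∣ v) {j : ℕ} (hj : j < n) : (j + v) % n ≠ j := by
  intro h
  have : j + v ≡ j + 0 [MOD n] := by rw [Nat.ModEq, h, add_zero, Nat.mod_eq_of_lt hj]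
  exact hv (Nat.modEq_zero_iff_dvd.mp (Nat.ModEq.add_left_cancel' j this))

variable (n v) in
def greedyStep (b : Finset ℕ) (j : ℕ) : Finset ℕ :=
  if (j + v) % n ≠ j ∧ (j + v) % n ∉ b ∧ j ∉ b then insert ((j + v) % n) (insert j b) else b

theorem greedyMatched_eq_foldl :
    greedyMatched n v = (List.range n).foldl (greedyStep n v) ∅ := rfl

theorem subset_greedyStep (b : Finset ℕ) (j : ℕ) : b ⊆ greedyStep n v b j := by
  unfold greedyStep
  split
  · exact (subset_insert _ _).trans (subset_insert _ _)
  · exact subset_rfl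

theorem mem_or_add_mod_mem_greedyStep {b : Finset ℕ} {j : ℕ} (hj : (j + v) % n ≠ j) :
    j ∈ greedyStep n v b j ∨ (j + v) % n ∈ greedyStep n v b j := by
  unfold greedyStep
  split_ifs with h
  · simp
  · by_cases hi : (j + v) % n ∈ b
    · exact .inr hi
    · exact .inl (by simpa [hj, hi] using h)

theorem subset_foldl_greedyStep (l : List ℕ) (b : Finset ℕ) :
    b ⊆ l.foldl (greedyStep n v) b := by
  induction l generalizing b with
  | nil => exact subset_rfl
  | cons a l ih => exact (subset_greedyStep b a).trans (ih _)

theorem mem_or_add_mod_mem_foldl_greedyStep {l : List ℕ} (hl : ∀ j ∈ l, (j + v) % n ≠ j)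
    (b : Finset ℕ) {j : ℕ} (hj : j ∈ l) :
    j ∈ l.foldl (greedyStep n v) b ∨ (j + v) % n ∈ l.foldl (greedyStep n v) b := by
  induction l generalizing b with
  | nil => simp at hj
  | cons a l ih =>
    rw [List.foldl_cons]
    rcases List.mem_cons.mp hj with rfl | hj
    · exact (mem_or_add_mod_mem_greedyStep (hl j List.mem_cons_self)).imp
        (subset_foldl_greedyStep l _ ·) (subset_foldl_greedyStep l _ ·)
    · exact ih (fun j hj => hl j (List.mem_cons_of_mem a hj)) _ hj

def IsUnionOfEdges (n v : ℕ) (b : Finset ℕ) : Prop :=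
  ∀ x ∈ b, ∃ j < n, j ∈ b ∧ (j + v) % n ∈ b ∧ (x = j ∨ x = (j + v) % n)

theorem IsUnionOfEdges.subset_range {b : Finset ℕ} (hb : IsUnionOfEdges n v b) :
    b ⊆ range n := by
  intro x hx
  obtain ⟨j, hjn, -, -, rfl | rfl⟩ := hb x hx
  exacts [mem_range.mpr hjn, mem_range.mpr (Nat.mod_lt _ (by omega))]

theorem isUnionOfEdges_greedyStep {b : Finset ℕ} (hb : IsUnionOfEdges n v b) {j : ℕ}
    (hj : j < n) : IsUnionOfEdges n v (greedyStep n v b j) := by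
  intro x hx
  unfold greedyStep at hx ⊢
  split_ifs at hx ⊢
  · rcases mem_insert.mp hx with rfl | hx
    · exact ⟨j, hj, by simp, by simp, .inr rfl⟩
    rcases mem_insert.mp hx with rfl | hx
    · exact ⟨x, hj, by simp, by simp, .inl rfl⟩
    obtain ⟨k, hk, hkb, hkvb, hxk⟩ := hb x hx
    exact ⟨k, hk, by simp [hkb], by simp [hkvb], hxk⟩
  · exact hb x hx

theorem isUnionOfEdges_foldl_greedyStep {b : Finset ℕ} (hb : IsUnionOfEdges n v b)
    {l : List ℕ} (hl : ∀ j ∈ l, j < n) : IsUnionOfEdges n v (l.foldl (greedyStep n v) b) := by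
  induction l generalizing b with
  | nil => exact hb
  | cons a l ih =>
    exact ih (isUnionOfEdges_greedyStep hb (hl a List.mem_cons_self))
      (fun j hj => hl j (List.mem_cons_of_mem a hj))

theorem isUnionOfEdges_greedyMatched : IsUnionOfEdges n v (greedyMatched n v) := by
  rw [greedyMatched_eq_foldl]
  exact isUnionOfEdges_foldl_greedyStep (by simp [IsUnionOfEdges]) (fun _ => List.mem_range.mp)

theorem add_mod_mem_greedyMatched (hv : ¬ n ∣ v) {u : ℕ} (hu : u ∈ range n \ greedyMatched n v) :
    (u + v) % n ∈ greedyMatched n v := by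
  obtain ⟨hun, huB⟩ := mem_sdiff.mp hu
  rw [greedyMatched_eq_foldl] at huB ⊢
  have hfree : ∀ j ∈ List.range n, (j + v) % n ≠ j :=
    fun j hj => add_mod_ne_self hv (List.mem_range.mp hj)
  have hun' : u ∈ List.range n := List.mem_range.mpr (mem_range.mp hun)
  exact (mem_or_add_mod_mem_foldl_greedyStep hfree ∅ hun').resolve_left huB

theorem add_mod_add_mod_mem_greedyMatched (hv : ¬ n ∣ v) {u : ℕ}
    (hu : u ∈ range n \ greedyMatched n v) :
    ((u + v) % n + v) % n ∈ greedyMatched n v := by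
  obtain ⟨hun, huB⟩ := mem_sdiff.mp hu
  obtain ⟨j, hjn, hjB, hjvB, rfl | hju⟩ :=
    isUnionOfEdges_greedyMatched _ (add_mod_mem_greedyMatched hv hu)
  · exact hjvB
  · exact absurd (add_mod_injOn (mem_range.mpr hjn) hun hju.symm ▸ hjB) huB

end GreedyMatching

open GreedyMatching in
theorem greedyMatched_card_ge_general (n v : ℕ) (hv1 : 1 ≤ v) (hv2 : 2*v ≤ n) :
    2 * n ≤ 3 * (greedyMatched n v).card := by
  have hv : ¬ n ∣ v := fun h => by have := Nat.le_of_dvd (by omega) h; omega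
  have hB := isUnionOfEdges_greedyMatched.subset_range (n := n) (v := v)
  have key := two_mul_card_sdiff_le_card add_mod_injOn
    (fun x _ => mem_range.mpr (Nat.mod_lt _ (by omega)))
    (fun u hu => ⟨add_mod_mem_greedyMatched hv hu, add_mod_add_mod_mem_greedyMatched hv hu⟩)
  have hsum := card_sdiff_add_card_eq_card hB
  rw [card_range] at hsum
  omega

/-- For `n ≥ 2` and `1 ≤ v ≤ n/2`, the greedy matching on the `v`-step cycle
matches at least `2n/3` vertices. -/
theorem greedyMatched_card_ge (n v : ℕ) (hn : 2 ≤ n) (hv1 : 1 ≤ v) (hv2 : 2*v ≤ n) :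
    2 * n ≤ 3 * (greedyMatched n v).card :=
  greedyMatched_card_ge_general n v hv1 hv2
end
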